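/- The left principal connection transforms equivariantly under the structure group: let A be a full-rank MPS parameter, B a tangent parameter, and G = (G(0),…,G(N)) a gauge transformation with G(0) = G(N) = 1. Then for every n = 1,…,N−1, ω^{(L)}_{A^{[G]}}(B^{[G]})(n) = G(n)^{-1}·ω^{(L)}_A(B)(n)·G(n), where (A^{[G]})^s(n) = G(n−1)^{-1}A^s(n)G(n) and (B^{[G]})^s(n) = G(n−1)^{-1}B^s(n)G(n). -/

import Mathlib

/-!
Both the density matrix `l(n)` and the auxiliary matrix `y(n)` of `A^{[G]}` are
`G(n)ᴴ X G(n)` for the corresponding matrix `X` of `A`: in each summand of the recursion the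
factors `G(n-1)` and `G(n-1)⁻¹` coming from the previous step and from the gauged tensors
cancel. Hence in `l(n)⁻¹ y(n)` the factors `G(n)ᴴ⁻¹ G(n)ᴴ` cancel and `G(n)⁻¹ ω(n) G(n)`
remains.
-/

open Matrix
open scoped ComplexOrder

noncomputable section

namespace MPS

variable {N : ℕ} {q : Fin N → ℕ} {D : ℕ → ℕ}

/-- The left virtual density matrices: `l 0 = 1`,
`l (n+1) = Σ_s A^s(n)† l(n) A^s(n)`. -/
def lMat (A : (n : Fin N) → Fin (q n) → Matrix (Fin (D n.val)) (Fin (D (n.val + 1))) ℂ) :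
    (k : ℕ) → k ≤ N → Matrix (Fin (D k)) (Fin (D k)) ℂ
  | 0, _ => 1
  | k + 1, h => ∑ s : Fin (q ⟨k, h⟩),
      (A ⟨k, h⟩ s)ᴴ * lMat A k (Nat.le_of_succ_le h) * A ⟨k, h⟩ s

/-- Auxiliary downward recursion for the right virtual density matrices:
`rAux j = r (N - j)`. -/
def rAux (A : (n : Fin N) → Fin (q n) → Matrix (Fin (D n.val)) (Fin (D (n.val + 1))) ℂ) :
    (j : ℕ) → j ≤ N → Matrix (Fin (D (N - j))) (Fin (D (N - j))) ℂ
  | 0, _ => 1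
  | j + 1, h => ∑ s : Fin (q ⟨N - (j + 1), by omega⟩),
      A ⟨N - (j + 1), by omega⟩ s *
        ((rAux A j (Nat.le_of_succ_le h)).submatrix
          (Fin.cast (congrArg D (by omega : N - (j + 1) + 1 = N - j)))
          (Fin.cast (congrArg D (by omega : N - (j + 1) + 1 = N - j)))) *
      (A ⟨N - (j + 1), by omega⟩ s)ᴴ

/-- The right virtual density matrices: `r N = 1`,
`r (n-1) = Σ_s A^s(n) r(n) A^s(n)†`. -/
def rMat (A : (n : Fin N) → Fin (q n) → Matrix (Fin (D n.val)) (Fin (D (n.val + 1))) ℂ)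
    (n : ℕ) (h : n ≤ N) : Matrix (Fin (D n)) (Fin (D n)) ℂ :=
  (rAux A (N - n) (Nat.sub_le N n)).submatrix
    (Fin.cast (congrArg D (by omega : n = N - (N - n))))
    (Fin.cast (congrArg D (by omega : n = N - (N - n))))

/-- An MPS parameter is full rank if all its virtual density matrices are positive
definite. -/
def FullRank (A : (n : Fin N) → Fin (q n) → Matrix (Fin (D n.val)) (Fin (D (n.val + 1))) ℂ) :
    Prop :=
  ∀ (k : ℕ) (h : k ≤ N), (lMat A k h).PosDef ∧ (rMat A k h).PosDef

end MPS

namespace MPS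

variable {N : ℕ} {q : Fin N → ℕ} {D : ℕ → ℕ}

/-- The recursively defined family `y`: `y 0 = 0`,
`y (n+1) = Σ_s A^s(n)† y(n) A^s(n) + Σ_s A^s(n)† l(n) B^s(n)`. -/
def yMat (A B : (n : Fin N) → Fin (q n) → Matrix (Fin (D n.val)) (Fin (D (n.val + 1))) ℂ) :
    (k : ℕ) → k ≤ N → Matrix (Fin (D k)) (Fin (D k)) ℂ
  | 0, _ => 0
  | k + 1, h =>
      (∑ s : Fin (q ⟨k, h⟩),
        (A ⟨k, h⟩ s)ᴴ * yMat A B k (Nat.le_of_succ_le h) * A ⟨k, h⟩ s) +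
      (∑ s : Fin (q ⟨k, h⟩),
        (A ⟨k, h⟩ s)ᴴ * lMat A k (Nat.le_of_succ_le h) * B ⟨k, h⟩ s)

/-- The left principal connection `ω^{(L)}_A(B)(n) = l(n)⁻¹ · y(n)`. -/
def omegaL (A B : (n : Fin N) → Fin (q n) → Matrix (Fin (D n.val)) (Fin (D (n.val + 1))) ℂ)
    (n : ℕ) (h : n ≤ N) : Matrix (Fin (D n)) (Fin (D n)) ℂ :=
  (lMat A n h)⁻¹ * yMat A B n h

end MPS

theorem Matrix.conjTranspose_gauge_mul_gauge {R ι κ : Type*} [CommRing R] [StarRing R]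
    [Fintype ι] [DecidableEq ι] [Fintype κ] {G : Matrix ι ι R} (hG : IsUnit G)
    (G' : Matrix κ κ R) (X Y : Matrix ι κ R) (M : Matrix ι ι R) :
    (G⁻¹ * X * G')ᴴ * (Gᴴ * M * G) * (G⁻¹ * Y * G') = G'ᴴ * (Xᴴ * M * Y) * G' := by
  have hdet : IsUnit G.det := (Matrix.isUnit_iff_isUnit_det G).mp hG
  have hdetH : IsUnit Gᴴ.det := by rw [Matrix.det_conjTranspose]; exact hdet.star
  simp only [Matrix.conjTranspose_mul, Matrix.conjTranspose_nonsing_inv, Matrix.mul_assoc,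
    Matrix.nonsing_inv_mul_cancel_left (h := hdetH),
    Matrix.mul_nonsing_inv_cancel_left (h := hdet)]

namespace MPS

variable {N : ℕ} {q : Fin N → ℕ} {D : ℕ → ℕ}
  {G : (n : ℕ) → Matrix (Fin (D n)) (Fin (D n)) ℂ}

/-- The gauge transform `A^{[G]}`, with `(A^{[G]})^s(n) = G(n-1)⁻¹ A^s(n) G(n)` in the
paper's one-based site numbering. -/
def gauge (G : (n : ℕ) → Matrix (Fin (D n)) (Fin (D n)) ℂ)
    (A : (n : Fin N) → Fin (q n) → Matrix (Fin (D n.val)) (Fin (D (n.val + 1))) ℂ) :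
    (n : Fin N) → Fin (q n) → Matrix (Fin (D n.val)) (Fin (D (n.val + 1))) ℂ :=
  fun m s => (G m.val)⁻¹ * A m s * G (m.val + 1)

theorem lMat_gauge (hG : ∀ k < N, IsUnit (G k)) (hG0 : G 0 = 1)
    (A : (n : Fin N) → Fin (q n) → Matrix (Fin (D n.val)) (Fin (D (n.val + 1))) ℂ) :
    ∀ (k : ℕ) (hk : k ≤ N), lMat (gauge G A) k hk = (G k)ᴴ * lMat A k hk * G k
  | 0, _ => by simp [lMat, hG0]
  | k + 1, hk => by
    rw [lMat, lMat, lMat_gauge hG hG0 A k, Matrix.mul_sum, Matrix.sum_mul]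
    exact Finset.sum_congr rfl fun s _ =>
      Matrix.conjTranspose_gauge_mul_gauge (hG k hk) _ _ _ _

theorem yMat_gauge (hG : ∀ k < N, IsUnit (G k)) (hG0 : G 0 = 1)
    (A B : (n : Fin N) → Fin (q n) → Matrix (Fin (D n.val)) (Fin (D (n.val + 1))) ℂ) :
    ∀ (k : ℕ) (hk : k ≤ N), yMat (gauge G A) (gauge G B) k hk = (G k)ᴴ * yMat A B k hk * G k
  | 0, _ => by simp [yMat]
  | k + 1, hk => by
    rw [yMat, yMat, yMat_gauge hG hG0 A B k, lMat_gauge hG hG0 A k, Matrix.mul_add,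
      Matrix.add_mul, Matrix.mul_sum, Matrix.sum_mul, Matrix.mul_sum, Matrix.sum_mul]
    congr 1 <;> exact Finset.sum_congr rfl fun s _ =>
      Matrix.conjTranspose_gauge_mul_gauge (hG k hk) _ _ _ _

theorem omegaL_gauge (hG : ∀ k < N, IsUnit (G k)) (hG0 : G 0 = 1)
    (A B : (n : Fin N) → Fin (q n) → Matrix (Fin (D n.val)) (Fin (D (n.val + 1))) ℂ)
    {n : ℕ} (hn : n ≤ N) (hGn : IsUnit (G n)) :
    omegaL (gauge G A) (gauge G B) n hn = (G n)⁻¹ * omegaL A B n hn * G n := by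
  have hdetH : IsUnit (G n)ᴴ.det := by
    rw [Matrix.det_conjTranspose]; exact ((Matrix.isUnit_iff_isUnit_det _).mp hGn).star
  rw [omegaL, omegaL, lMat_gauge hG hG0, yMat_gauge hG hG0, Matrix.mul_inv_rev,
    Matrix.mul_inv_rev]
  simp only [Matrix.mul_assoc, Matrix.nonsing_inv_mul_cancel_left (h := hdetH)]

end MPS

/-- **Equivariance of the left principal connection under the structure group:** for a
full-rank MPS parameter `A`, a tangent parameter `B` and a gauge transformation `G` with
`G 0 = 1` and `G N = 1`, one has
`ω^{(L)}_{A^{[G]}}(B^{[G]})(n) = G(n)⁻¹ · ω^{(L)}_A(B)(n) · G(n)` for `n = 1, …, N−1`. -/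
theorem mps_connection_equivariant (N : ℕ) (q : Fin N → ℕ) (D : ℕ → ℕ)
    (A B : (n : Fin N) → Fin (q n) → Matrix (Fin (D n.val)) (Fin (D (n.val + 1))) ℂ)
    (G : (n : ℕ) → Matrix (Fin (D n)) (Fin (D n)) ℂ)
    (hG : ∀ n, n ≤ N → IsUnit (G n)) (hG0 : G 0 = 1) :
    ∀ (n : ℕ) (h1 : 1 ≤ n) (h2 : n ≤ N - 1),
      MPS.omegaL (fun m s => (G m.val)⁻¹ * A m s * G (m.val + 1))
          (fun m s => (G m.val)⁻¹ * B m s * G (m.val + 1)) n (by omega)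
        = (G n)⁻¹ * MPS.omegaL A B n (by omega) * G n :=
  fun n _ h2 => MPS.omegaL_gauge (fun k hk => hG k hk.le) hG0 A B _ (hG n (by omega))
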